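/- Type for zero: if t = 0 or t = α·0 and Γ ⊢ t : T is derivable in λ^vec, then there exists a type R with T ≡ 0·R. -/

import Mathlib

/-!
Formalization of the vectorial λ-calculus (Arrighi, Díaz-Caro, Valiron):
syntax of types and terms, type equivalence, typing rules, reduction, etc.
-/

universe u

/-- Types of λ^vec. Type variables come in two kinds, tagged by a `Bool`:
`true` for unit type variables 𝕌, `false` for general type variables 𝕏.
`fa b n U` is ∀X.U where X is the variable of kind `b` with index `n`. -/
inductive VType (S : Type u) : Type u where
  | uvar : ℕ → VType S
  | gvar : ℕ → VType S
  | arrow : VType S → VType S → VType S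
  | fa : Bool → ℕ → VType S → VType S
  | smul : S → VType S → VType S
  | add : VType S → VType S → VType S

namespace VType

variable {S : Type u}

/-- Unit types: U ::= 𝕌 | U → T | ∀𝕌.U | ∀𝕏.U -/
inductive IsUnit : VType S → Prop where
  | uvar (n : ℕ) : IsUnit (uvar n)
  | arrow {U T : VType S} : IsUnit U → IsUnit (arrow U T)
  | fa {b : Bool} {n : ℕ} {U : VType S} : IsUnit U → IsUnit (fa b n U)

/-- 𝒰 ::= U | 𝕏 : a unit type or a general type variable. -/
def IsUG (T : VType S) : Prop := IsUnit T ∨ ∃ n, T = gvar n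

/-- Free type variables (as kind-index pairs). -/
def freeTV : VType S → Set (Bool × ℕ)
  | uvar n => {(true, n)}
  | gvar n => {(false, n)}
  | arrow U T => freeTV U ∪ freeTV T
  | fa b n U => freeTV U \ {(b, n)}
  | smul _ T => freeTV T
  | add T R => freeTV T ∪ freeTV R

/-- Substitution of the type variable `v` by the type `A`;
it distributes homomorphically through `smul` and `add`. -/
def substT : VType S → (Bool × ℕ) → VType S → VType S
  | uvar n, v, A => if v = (true, n) then A else uvar n
  | gvar n, v, A => if v = (false, n) then A else gvar n
  | arrow U T, v, A => arrow (substT U v A) (substT T v A)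
  | fa b n U, v, A => if v = (b, n) then fa b n U else fa b n (substT U v A)
  | smul a T, v, A => smul a (substT T v A)
  | add T R, v, A => add (substT T v A) (substT R v A)

/-- The kind condition: a unit variable may only be substituted by a unit type. -/
def kindOK (v : Bool × ℕ) (A : VType S) : Prop := v.1 = true → IsUnit A

/-- ∀X⃗.T for a vector of variables. -/
def faMany (Xs : List (Bool × ℕ)) (T : VType S) : VType S :=
  Xs.foldr (fun v T => fa v.1 v.2 T) T

/-- T[A⃗/X⃗] for vectors of variables and types. -/
def substMany (T : VType S) (Xs : List (Bool × ℕ)) (As : List (VType S)) : VType S :=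
  (Xs.zip As).foldl (fun T p => substT T p.1 p.2) T

/-- The linear combination Σᵢ αᵢ·Tᵢ of a list of scalar–type pairs.
(The value on the empty list is irrelevant junk; it is only used on
nonempty lists.) -/
def ssumL [CommRing S] : List (S × VType S) → VType S
  | [] => smul 0 (uvar 0)
  | [p] => smul p.1 p.2
  | p :: l => add (smul p.1 p.2) (ssumL l)

end VType

/-- Equivalence of types: the smallest congruence satisfying
1·T ≡ T, α·(β·T) ≡ (α×β)·T, α·T + α·R ≡ α·(T+R), α·T + β·T ≡ (α+β)·T,
commutativity and associativity of +. -/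
inductive TEq {S : Type u} [CommRing S] : VType S → VType S → Prop where
  | refl (T : VType S) : TEq T T
  | symm {T R : VType S} : TEq T R → TEq R T
  | trans {T R Q : VType S} : TEq T R → TEq R Q → TEq T Q
  | oneSmul (T : VType S) : TEq (VType.smul 1 T) T
  | smulSmul (a b : S) (T : VType S) :
      TEq (VType.smul a (VType.smul b T)) (VType.smul (a * b) T)
  | smulAdd (a : S) (T R : VType S) :
      TEq (VType.add (VType.smul a T) (VType.smul a R)) (VType.smul a (VType.add T R))
  | addSmul (a b : S) (T : VType S) :
      TEq (VType.add (VType.smul a T) (VType.smul b T)) (VType.smul (a + b) T)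
  | comm (T R : VType S) : TEq (VType.add T R) (VType.add R T)
  | assoc (T R Q : VType S) :
      TEq (VType.add T (VType.add R Q)) (VType.add (VType.add T R) Q)
  | arrowCong {U V T R : VType S} : TEq U V → TEq T R → TEq (VType.arrow U T) (VType.arrow V R)
  | faCong (b : Bool) (n : ℕ) {T R : VType S} : TEq T R → TEq (VType.fa b n T) (VType.fa b n R)
  | smulCong (a : S) {T R : VType S} : TEq T R → TEq (VType.smul a T) (VType.smul a R)
  | addCong {T T' R R' : VType S} :
      TEq T T' → TEq R R' → TEq (VType.add T R) (VType.add T' R')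

/-- Terms of λ^vec. -/
inductive VTerm (S : Type u) : Type u where
  | var : ℕ → VTerm S
  | lam : ℕ → VTerm S → VTerm S
  | app : VTerm S → VTerm S → VTerm S
  | zero : VTerm S
  | smul : S → VTerm S → VTerm S
  | add : VTerm S → VTerm S → VTerm S

namespace VTerm

variable {S : Type u}

/-- Basis terms: variables and λ-abstractions. -/
def IsBasis : VTerm S → Prop
  | var _ => True
  | lam _ _ => True
  | _ => False

/-- Free term variables. -/
def freeV : VTerm S → Set ℕ
  | var x => {x}
  | lam x t => freeV t \ {x}
  | app t r => freeV t ∪ freeV r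
  | zero => ∅
  | smul _ t => freeV t
  | add t r => freeV t ∪ freeV r

def ClosedTerm (t : VTerm S) : Prop := freeV t = ∅

/-- Capture-avoiding substitution of the basis term `b` for the variable `x`;
it distributes homomorphically through linear combinations. -/
def substV : VTerm S → ℕ → VTerm S → VTerm S
  | var y, x, b => if y = x then b else var y
  | lam y t, x, b => if y = x then lam y t else lam y (substV t x b)
  | app t r, x, b => app (substV t x b) (substV r x b)
  | zero, _, _ => zero
  | smul a t, x, b => smul a (substV t x b)
  | add t r, x, b => add (substV t x b) (substV r x b)

end VTerm

/-- Typing contexts: partial assignments of (unit) types to term variables. -/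
def Ctx (S : Type u) := ℕ → Option (VType S)

def Ctx.extend {S : Type u} (Γ : Ctx S) (x : ℕ) (U : VType S) : Ctx S :=
  fun y => if y = x then some U else Γ y

/-- Free type variables of a context. -/
def Ctx.freeTV {S : Type u} (Γ : Ctx S) : Set (Bool × ℕ) :=
  {v | ∃ x U, Γ x = some U ∧ v ∈ VType.freeTV U}

/-- Type substitution applied pointwise to a context. -/
def Ctx.substT {S : Type u} (Γ : Ctx S) (v : Bool × ℕ) (A : VType S) : Ctx S :=
  fun x => (Γ x).map (fun U => VType.substT U v A)

/-- The typing rules of the vectorial type system: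
(ax), (0_I), (→_I), (→_E), (∀_I), (∀_E), (α_I), (+_I), (≡). -/
inductive Typing {S : Type u} [CommRing S] : Ctx S → VTerm S → VType S → Prop where
  | ax {Γ : Ctx S} {x : ℕ} {U : VType S} :
      Γ x = some U → VType.IsUnit U → Typing Γ (VTerm.var x) U
  | zeroI {Γ : Ctx S} {t : VTerm S} {T : VType S} :
      Typing Γ t T → Typing Γ VTerm.zero (VType.smul 0 T)
  | arrI {Γ : Ctx S} {x : ℕ} {U : VType S} {t : VTerm S} {T : VType S} :
      VType.IsUnit U → Typing (Γ.extend x U) t T →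
      Typing Γ (VTerm.lam x t) (VType.arrow U T)
  | arrE {Γ : Ctx S} {t r : VTerm S} (U : VType S) (Xs : List (Bool × ℕ))
      (p : S × VType S) (ps : List (S × VType S))
      (q : S × List (VType S)) (qs : List (S × List (VType S))) :
      VType.IsUnit U →
      (∀ w ∈ q :: qs, w.2.length = Xs.length ∧
        ∀ pr ∈ Xs.zip w.2, VType.kindOK pr.1 pr.2) →
      Typing Γ t (VType.ssumL ((p :: ps).map
        (fun pi => (pi.1, VType.faMany Xs (VType.arrow U pi.2))))) →
      Typing Γ r (VType.ssumL ((q :: qs).map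
        (fun qj => (qj.1, VType.substMany U Xs qj.2)))) →
      Typing Γ (VTerm.app t r)
        (VType.ssumL ((p :: ps).flatMap (fun pi => (q :: qs).map
          (fun qj => (pi.1 * qj.1, VType.substMany pi.2 Xs qj.2)))))
  | faI {Γ : Ctx S} {t : VTerm S} (v : Bool × ℕ)
      (p : S × VType S) (ps : List (S × VType S)) :
      v ∉ Γ.freeTV →
      (∀ w ∈ p :: ps, VType.IsUnit w.2) →
      Typing Γ t (VType.ssumL (p :: ps)) →
      Typing Γ t (VType.ssumL ((p :: ps).map (fun w => (w.1, VType.fa v.1 v.2 w.2))))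
  | faE {Γ : Ctx S} {t : VTerm S} (v : Bool × ℕ) (A : VType S)
      (p : S × VType S) (ps : List (S × VType S)) :
      VType.kindOK v A →
      (∀ w ∈ p :: ps, VType.IsUnit w.2) →
      Typing Γ t (VType.ssumL ((p :: ps).map (fun w => (w.1, VType.fa v.1 v.2 w.2)))) →
      Typing Γ t (VType.ssumL ((p :: ps).map (fun w => (w.1, VType.substT w.2 v A))))
  | smulI {Γ : Ctx S} {t : VTerm S} {T : VType S} (a : S) :
      Typing Γ t T → Typing Γ (VTerm.smul a t) (VType.smul a T)
  | addI {Γ : Ctx S} {t r : VTerm S} {T R : VType S} :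
      Typing Γ t T → Typing Γ r R → Typing Γ (VTerm.add t r) (VType.add T R)
  | equiv {Γ : Ctx S} {t : VTerm S} {T R : VType S} :
      Typing Γ t T → TEq T R → Typing Γ t R

/-- AC equivalence of terms (associativity and commutativity of +,
as a congruence). -/
inductive ACEq {S : Type u} : VTerm S → VTerm S → Prop where
  | refl (t : VTerm S) : ACEq t t
  | symm {t r : VTerm S} : ACEq t r → ACEq r t
  | trans {t r u : VTerm S} : ACEq t r → ACEq r u → ACEq t u
  | comm (t r : VTerm S) : ACEq (VTerm.add t r) (VTerm.add r t)
  | assoc (t r u : VTerm S) :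
      ACEq (VTerm.add t (VTerm.add r u)) (VTerm.add (VTerm.add t r) u)
  | lamCong (x : ℕ) {t r : VTerm S} : ACEq t r → ACEq (VTerm.lam x t) (VTerm.lam x r)
  | appCong {t t' r r' : VTerm S} :
      ACEq t t' → ACEq r r' → ACEq (VTerm.app t r) (VTerm.app t' r')
  | smulCong (a : S) {t r : VTerm S} : ACEq t r → ACEq (VTerm.smul a t) (VTerm.smul a r)
  | addCong {t t' r r' : VTerm S} :
      ACEq t t' → ACEq r r' → ACEq (VTerm.add t r) (VTerm.add t' r')

/-- One-step reduction of λ^vec, labelled by a `Bool` which is `true`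
exactly when the underlying rule is a factorisation rule (Group F).
Reduction acts modulo AC of +, and is closed under contexts. -/
inductive Red {S : Type u} [CommRing S] : Bool → VTerm S → VTerm S → Prop where
  -- Group E
  | zeroSmul (t : VTerm S) : Red false (VTerm.smul 0 t) VTerm.zero
  | oneSmul (t : VTerm S) : Red false (VTerm.smul 1 t) t
  | smulZero (a : S) : Red false (VTerm.smul a VTerm.zero) VTerm.zero
  | smulSmul (a b : S) (t : VTerm S) :
      Red false (VTerm.smul a (VTerm.smul b t)) (VTerm.smul (a * b) t)
  | smulAdd (a : S) (t r : VTerm S) :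
      Red false (VTerm.smul a (VTerm.add t r)) (VTerm.add (VTerm.smul a t) (VTerm.smul a r))
  -- Group F
  | factor (a b : S) (t : VTerm S) :
      Red true (VTerm.add (VTerm.smul a t) (VTerm.smul b t)) (VTerm.smul (a + b) t)
  | factor1 (a : S) (t : VTerm S) :
      Red true (VTerm.add (VTerm.smul a t) t) (VTerm.smul (a + 1) t)
  | factor2 (t : VTerm S) : Red true (VTerm.add t t) (VTerm.smul (1 + 1) t)
  | addZero (t : VTerm S) : Red true (VTerm.add t VTerm.zero) t
  -- Group B
  | beta (x : ℕ) (t b : VTerm S) :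
      VTerm.IsBasis b → Red false (VTerm.app (VTerm.lam x t) b) (VTerm.substV t x b)
  -- Group A
  | appAddL (t r u : VTerm S) :
      Red false (VTerm.app (VTerm.add t r) u) (VTerm.add (VTerm.app t u) (VTerm.app r u))
  | appAddR (t r u : VTerm S) :
      Red false (VTerm.app t (VTerm.add r u)) (VTerm.add (VTerm.app t r) (VTerm.app t u))
  | appSmulL (a : S) (t r : VTerm S) :
      Red false (VTerm.app (VTerm.smul a t) r) (VTerm.smul a (VTerm.app t r))
  | appSmulR (a : S) (t r : VTerm S) :
      Red false (VTerm.app t (VTerm.smul a r)) (VTerm.smul a (VTerm.app t r))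
  | appZeroL (t : VTerm S) : Red false (VTerm.app VTerm.zero t) VTerm.zero
  | appZeroR (t : VTerm S) : Red false (VTerm.app t VTerm.zero) VTerm.zero
  -- contextual rules
  | smulCtx {f : Bool} {t r : VTerm S} (a : S) :
      Red f t r → Red f (VTerm.smul a t) (VTerm.smul a r)
  | addCtx {f : Bool} {t r : VTerm S} (u : VTerm S) :
      Red f t r → Red f (VTerm.add u t) (VTerm.add u r)
  | appCtxR {f : Bool} {t r : VTerm S} (u : VTerm S) :
      Red f t r → Red f (VTerm.app u t) (VTerm.app u r)
  | appCtxL {f : Bool} {t r : VTerm S} (u : VTerm S) :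
      Red f t r → Red f (VTerm.app t u) (VTerm.app r u)
  | lamCtx {f : Bool} {t r : VTerm S} (x : ℕ) :
      Red f t r → Red f (VTerm.lam x t) (VTerm.lam x r)
  -- reduction modulo AC of +
  | ac {f : Bool} {t t' r r' : VTerm S} :
      ACEq t t' → Red f t' r' → ACEq r' r → Red f t r

/-- One-step reduction (by any rule). -/
def Red1 {S : Type u} [CommRing S] (t r : VTerm S) : Prop := ∃ f, Red f t r

/-- Strong normalisation: every reduction sequence from `t` is finite. -/
def SN {S : Type u} [CommRing S] (t : VTerm S) : Prop :=
  Acc (fun a b : VTerm S => Red1 b a) t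

/-- Algebraic contexts F(t⃗) ::= tᵢ | F(t⃗)+G(t⃗) | α·F(t⃗) | 0. -/
inductive AlgCtx (S : Type u) : Type u where
  | idx : ℕ → AlgCtx S
  | add : AlgCtx S → AlgCtx S → AlgCtx S
  | smul : S → AlgCtx S → AlgCtx S
  | zero : AlgCtx S

/-- Filling an algebraic context with a list of terms. -/
def AlgCtx.fill {S : Type u} : AlgCtx S → List (VTerm S) → VTerm S
  | .idx i, ts => ts.getD i VTerm.zero
  | .add F G, ts => VTerm.add (F.fill ts) (G.fill ts)
  | .smul a F, ts => VTerm.smul a (F.fill ts)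
  | .zero, _ => VTerm.zero

/-- `t` is not a λ-abstraction. -/
def NotLam {S : Type u} : VTerm S → Prop
  | VTerm.lam _ _ => False
  | _ => True

/-- Closed neutral terms: closed, not an abstraction, and reducing to something. -/
def Neutral {S : Type u} [CommRing S] (t : VTerm S) : Prop :=
  VTerm.ClosedTerm t ∧ NotLam t ∧ ∃ r, Red1 t r

/-- Reducibility candidates: sets of closed terms satisfying RC1–RC4. -/
def IsRC {S : Type u} [CommRing S] (A : Set (VTerm S)) : Prop :=
  (∀ t ∈ A, VTerm.ClosedTerm t ∧ SN t) ∧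
  (∀ t ∈ A, ∀ r, Red1 t r → r ∈ A) ∧
  (∀ t, Neutral t → (∀ r, Red1 t r → r ∈ A) → t ∈ A) ∧
  VTerm.zero ∈ A

/-- The arrow operation on candidates: closure under RC3 and RC4 of the set of
closed `t` with (t)0 ∈ B and (t)b ∈ B for every basis term b ∈ A. -/
inductive arrowSet {S : Type u} [CommRing S] (A B : Set (VTerm S)) : VTerm S → Prop where
  | base {t : VTerm S} : VTerm.ClosedTerm t → VTerm.app t VTerm.zero ∈ B →
      (∀ b ∈ A, VTerm.IsBasis b → VTerm.app t b ∈ B) → arrowSet A B t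
  | neutral {t : VTerm S} : Neutral t → (∀ r, Red1 t r → arrowSet A B r) → arrowSet A B t
  | zero : arrowSet A B VTerm.zero

/-- The sum Σᵢ 𝒜ᵢ of a family of candidates: closure under CC, RC2 and RC3
of the set of algebraic combinations F(t⃗) of terms each in some 𝒜ᵢ. -/
inductive sumSet {S : Type u} [CommRing S] {ι : Type*} (As : ι → Set (VTerm S)) :
    VTerm S → Prop where
  | base (F : AlgCtx S) (ts : List (VTerm S)) :
      (∀ t ∈ ts, ∃ i, t ∈ As i) → sumSet As (F.fill ts)
  | red {t r : VTerm S} : sumSet As t → Red1 t r → sumSet As r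
  | neutral {t : VTerm S} : Neutral t → (∀ r, Red1 t r → sumSet As r) → sumSet As t
  | cc (F : AlgCtx S) (ts : List (VTerm S)) {t : VTerm S} :
      sumSet As (F.fill ts) → t ∈ ts → sumSet As t

/-- The order ⊒ on types (`TGe T R` means T ⊒ R): the smallest reflexive,
transitive, congruent relation with (α+β)·T ⊒ α·T + β·T' whenever some term
can be typed with both α·T and β·T', and T ⊒ T + 0·R. -/
inductive TGe {S : Type u} [CommRing S] : VType S → VType S → Prop where
  | refl (T : VType S) : TGe T T
  | trans {T R Q : VType S} : TGe T R → TGe R Q → TGe T Q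
  | factor {Γ : Ctx S} {t : VTerm S} {a b : S} {T T' : VType S} :
      Typing Γ (VTerm.smul a t) (VType.smul a T) →
      Typing Γ (VTerm.smul b t) (VType.smul b T') →
      TGe (VType.smul (a + b) T) (VType.add (VType.smul a T) (VType.smul b T'))
  | addZero (T R : VType S) : TGe T (VType.add T (VType.smul 0 R))
  | addCong (Q : VType S) {T R : VType S} : TGe T R → TGe (VType.add T Q) (VType.add R Q)
  | smulCong (a : S) {T R : VType S} : TGe T R → TGe (VType.smul a T) (VType.smul a R)
  | arrowCong (U : VType S) {T R : VType S} :
      TGe T R → TGe (VType.arrow U T) (VType.arrow U R)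
  | faCong (b : Bool) (n : ℕ) {T R : VType S} :
      TGe T R → TGe (VType.fa b n T) (VType.fa b n R)

/-- The single-variable relation T ≻^t_{X,Γ} R of Definition 4.3. -/
inductive StepOrd {S : Type u} [CommRing S] (Γ : Ctx S) (t : VTerm S) (X : Bool × ℕ) :
    VType S → VType S → Prop where
  | faI {T R : VType S} (l : List (S × VType S)) :
      l ≠ [] → (∀ p ∈ l, VType.IsUnit p.2) →
      X ∉ Γ.freeTV → Typing Γ t T → Typing Γ t R →
      TEq T (VType.ssumL l) →
      TEq R (VType.ssumL (l.map (fun p => (p.1, VType.fa X.1 X.2 p.2)))) →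
      StepOrd Γ t X T R
  | faE {T R : VType S} (l : List (S × VType S)) (A : VType S) :
      l ≠ [] → (∀ p ∈ l, VType.IsUnit p.2) → VType.kindOK X A →
      X ∉ Γ.freeTV → Typing Γ t T → Typing Γ t R →
      TEq T (VType.ssumL (l.map (fun p => (p.1, VType.fa X.1 X.2 p.2)))) →
      TEq R (VType.ssumL (l.map (fun p => (p.1, VType.substT p.2 X A)))) →
      StepOrd Γ t X T R

/-- The relation T ≽^t_{𝒱,Γ} R of Definition 4.3. -/
inductive TOrd {S : Type u} [CommRing S] (Γ : Ctx S) (t : VTerm S) :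
    Set (Bool × ℕ) → VType S → VType S → Prop where
  | step {X : Bool × ℕ} {T R : VType S} : StepOrd Γ t X T R → TOrd Γ t {X} T R
  | trans {V₁ V₂ : Set (Bool × ℕ)} {T R Q : VType S} :
      TOrd Γ t V₁ T R → TOrd Γ t V₂ R Q → TOrd Γ t (V₁ ∪ V₂) T Q
  | ofEq (V : Set (Bool × ℕ)) {T R : VType S} : TEq T R → TOrd Γ t V T R

/-- Inner sum Σⱼ βⱼ·bⱼ of terms, with the convention that the empty sum is 0. -/
def tsumI {S : Type u} : List (S × VTerm S) → VTerm S
  | [] => VTerm.zero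
  | [p] => VTerm.smul p.1 p.2
  | p :: l => VTerm.add (VTerm.smul p.1 p.2) (tsumI l)

/-- Outer sum of a list of terms. -/
def tsumO {S : Type u} : List (VTerm S) → VTerm S
  | [] => VTerm.zero
  | [t] => t
  | t :: l => VTerm.add t (tsumO l)

/-!
The rules (∀_I) and (∀_E) act on every unit summand of a type Σᵢ αᵢ·Uᵢ at once. Such an
action extends homomorphically through `·` and `+` to a map on all types which respects `≡`
(as soon as it respects the congruence rules for arrows and quantifiers) and sends `0·R` to
`0·R'`. Hence a type equivalent to `0·R` stays so under (∀_I) and (∀_E); the remaining rules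
that can type `0` or `α·0` are (0_I), (α_I) and (≡), for which the claim is immediate.
-/

variable {S : Type u}

theorem TEq.substT [CommRing S] {T R : VType S} (h : TEq T R) (v : Bool × ℕ) (A : VType S) :
    TEq (T.substT v A) (R.substT v A) := by
  induction h with
  | refl => exact .refl _
  | symm _ ih => exact ih.symm
  | trans _ _ ih₁ ih₂ => exact ih₁.trans ih₂
  | oneSmul => exact .oneSmul _
  | smulSmul => exact .smulSmul _ _ _
  | smulAdd => exact .smulAdd _ _ _
  | addSmul => exact .addSmul _ _ _
  | comm => exact .comm _ _
  | assoc => exact .assoc _ _ _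
  | arrowCong _ _ ih₁ ih₂ => exact .arrowCong ih₁ ih₂
  | faCong b n h ih =>
      simp only [VType.substT]
      split
      · exact .faCong b n h
      · exact .faCong b n ih
  | smulCong a _ ih => exact .smulCong a ih
  | addCong _ _ ih₁ ih₂ => exact .addCong ih₁ ih₂

namespace VType

def mapAtoms (f : VType S → VType S) : VType S → VType S
  | uvar n => f (uvar n)
  | gvar n => f (gvar n)
  | arrow U T => f (arrow U T)
  | fa b n U => f (fa b n U)
  | smul a T => smul a (mapAtoms f T)
  | add T R => add (mapAtoms f T) (mapAtoms f R)

theorem mapAtoms_of_isUnit (f : VType S → VType S) {U : VType S} (hU : IsUnit U) :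
    U.mapAtoms f = f U := by
  cases hU <;> rfl

theorem mapAtoms_ssumL [CommRing S] (f : VType S → VType S) {l : List (S × VType S)}
    (hl : l ≠ []) :
    (ssumL l).mapAtoms f = ssumL (l.map fun w => (w.1, w.2.mapAtoms f)) := by
  induction l with
  | nil => exact absurd rfl hl
  | cons p l ih =>
      cases l with
      | nil => rfl
      | cons q l => simp only [ssumL, mapAtoms, ih (List.cons_ne_nil q l), List.map_cons]

/-- The action of (∀_E) on a summand `∀X.U`; other summands are left unchanged. -/
def instantiate (v : Bool × ℕ) (A : VType S) : VType S → VType S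
  | fa b n U => if v = (b, n) then U.substT v A else fa b n U
  | T => T

end VType

namespace TEq

open VType

variable [CommRing S]

theorem mapAtoms {f : VType S → VType S}
    (harrow : ∀ {U V T R : VType S}, TEq U V → TEq T R → TEq (f (arrow U T)) (f (arrow V R)))
    (hfa : ∀ b n {T R : VType S}, TEq T R → TEq (f (fa b n T)) (f (fa b n R)))
    {T R : VType S} (h : TEq T R) : TEq (T.mapAtoms f) (R.mapAtoms f) := by
  induction h with
  | refl => exact .refl _
  | symm _ ih => exact ih.symm
  | trans _ _ ih₁ ih₂ => exact ih₁.trans ih₂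
  | oneSmul => exact .oneSmul _
  | smulSmul => exact .smulSmul _ _ _
  | smulAdd => exact .smulAdd _ _ _
  | addSmul => exact .addSmul _ _ _
  | comm => exact .comm _ _
  | assoc => exact .assoc _ _ _
  | arrowCong h₁ h₂ => exact harrow h₁ h₂
  | faCong b n h => exact hfa b n h
  | smulCong a _ ih => exact .smulCong a ih
  | addCong _ _ ih₁ ih₂ => exact .addCong ih₁ ih₂

theorem ssumL_map_smul_zero {f : VType S → VType S}
    (harrow : ∀ {U V T R : VType S}, TEq U V → TEq T R → TEq (f (arrow U T)) (f (arrow V R)))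
    (hfa : ∀ b n {T R : VType S}, TEq T R → TEq (f (fa b n T)) (f (fa b n R)))
    {l : List (S × VType S)} (hl : l ≠ []) (hunit : ∀ w ∈ l, IsUnit w.2)
    {R : VType S} (h : TEq (ssumL l) (smul 0 R)) :
    TEq (ssumL (l.map fun w => (w.1, f w.2))) (smul 0 (R.mapAtoms f)) := by
  have hmap := h.mapAtoms harrow hfa
  rw [mapAtoms_ssumL f hl] at hmap
  rwa [List.map_congr_left fun w hw => by rw [mapAtoms_of_isUnit f (hunit w hw)]] at hmap

theorem smul_smul_zero (a : S) {T R : VType S} (h : TEq T (smul 0 R)) :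
    TEq (smul a T) (smul 0 R) := by
  simpa only [mul_zero] using (smulCong a h).trans (smulSmul a 0 R)

end TEq

open VType in
theorem Typing.exists_teq_smul_zero [CommRing S] {Γ : Ctx S} {t : VTerm S} {T : VType S}
    (h : Typing Γ t T) (ht : t = VTerm.zero ∨ ∃ α : S, t = VTerm.smul α VTerm.zero) :
    ∃ R : VType S, TEq T (smul 0 R) := by
  induction h with
  | ax | arrI | arrE | addI => rcases ht with h | ⟨_, h⟩ <;> cases h
  | @zeroI _ _ T => exact ⟨T, .refl _⟩
  | @smulI _ _ _ a _ ih =>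
      obtain h | ⟨_, h⟩ := ht
      · cases h
      · cases h
        obtain ⟨R, hR⟩ := ih (.inl rfl)
        exact ⟨R, hR.smul_smul_zero a⟩
  | faI v p ps _ hunit _ ih =>
      obtain ⟨R, hR⟩ := ih ht
      exact ⟨_, hR.ssumL_map_smul_zero (f := fa v.1 v.2)
        (fun h₁ h₂ => .faCong _ _ (.arrowCong h₁ h₂))
        (fun _ _ {_ _} h => .faCong _ _ (.faCong _ _ h))
        (List.cons_ne_nil p ps) hunit⟩
  | faE v A p ps _ hunit _ ih =>
      obtain ⟨R, hR⟩ := ih ht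
      have hinst := hR.ssumL_map_smul_zero (f := instantiate v A)
        (fun h₁ h₂ => .arrowCong h₁ h₂)
        (fun b n {_ _} h => by
          simp only [instantiate]
          split
          · exact h.substT v A
          · exact .faCong b n h)
        (by simp) (List.forall_mem_map.mpr fun w hw => .fa (hunit w hw))
      simp only [List.map_map, Function.comp_def, instantiate] at hinst
      exact ⟨_, hinst⟩
  | equiv _ hTR ih =>
      obtain ⟨R, hR⟩ := ih ht
      exact ⟨R, hTR.symm.trans hR⟩

/-- Type for zero. -/
theorem type_for_zero {S : Type} [CommRing S] {Γ : Ctx S} {t : VTerm S}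
    {T : VType S}
    (ht : t = VTerm.zero ∨ ∃ α : S, t = VTerm.smul α VTerm.zero)
    (h : Typing Γ t T) :
    ∃ R : VType S, TEq T (VType.smul 0 R) :=
  h.exists_teq_smul_zero ht
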